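/- Let K = ℚ(√2)(t) and let E be the elliptic curve over K given by y² = x³ + ((2t² − 3t)/2)·x² + (t² − t³)·x + (1/8)·t²(t−1)². With P₂ = (t, √2·t(t+1)/4), one has 2·P₂ = ((2t−1)t/2, −√2·t(4t² − 5t + 1)/4) in E(K). -/

import Mathlib

open IntermediateField WeierstrassCurve

/-- The quadratic field `ℚ(√2)`, realized inside `ℝ`. -/
noncomputable abbrev QSqrt2 : IntermediateField ℚ ℝ := ℚ⟮Real.sqrt 2⟯

/-- The field `K = ℚ(√2)(t)` of rational functions over `ℚ(√2)`. -/
noncomputable abbrev Kfield : Type := RatFunc QSqrt2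

/-- `√2` as an element of `K = ℚ(√2)(t)`. -/
noncomputable def sqrt2K : Kfield :=
  RatFunc.C ⟨Real.sqrt 2, IntermediateField.mem_adjoin_simple_self ℚ (Real.sqrt 2)⟩

/-- `t` as an element of `K = ℚ(√2)(t)`. -/
noncomputable def tK : Kfield := RatFunc.X

/-- The elliptic curve `E : y² = x³ + ((2t² − 3t)/2)x² + (t² − t³)x + (1/8)t²(t−1)²`
over `K = ℚ(√2)(t)`. -/
noncomputable def Ecurve : WeierstrassCurve.Affine Kfield :=
  { a₁ := 0
    a₂ := (2 * tK ^ 2 - 3 * tK) / 2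
    a₃ := 0
    a₄ := tK ^ 2 - tK ^ 3
    a₆ := (1 / 8) * tK ^ 2 * (tK - 1) ^ 2 }

namespace WeierstrassCurve.Affine.Point

variable {F : Type*} [Field F] [DecidableEq F] {W : Affine F}

lemma two_zsmul_some_of_tangent {x y ℓ x' y' : F} {h : W.Nonsingular x y}
    {h' : W.Nonsingular x' y'} (hy : y ≠ W.negY x y)
    (hℓ : ℓ * (y - W.negY x y) = 3 * x ^ 2 + 2 * W.a₂ * x + W.a₄ - W.a₁ * y)
    (hx' : W.addX x x ℓ = x') (hy' : W.addY x x y ℓ = y') :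
    (2 : ℤ) • some x y h = some x' y' h' := by
  have hslope : W.slope x x y y = ℓ := by
    rw [slope_of_Y_ne rfl hy, div_eq_iff (sub_ne_zero.mpr hy), hℓ]
  rw [two_zsmul, add_self_of_Y_ne hy, some.injEq, hslope]
  exact ⟨hx', hy'⟩

end WeierstrassCurve.Affine.Point

lemma sqrt2K_sq : sqrt2K ^ 2 = 2 := by
  rw [sqrt2K, ← map_pow, ← map_ofNat RatFunc.C 2]
  congr 1
  ext
  push_cast
  exact Real.sq_sqrt zero_le_two

lemma tK_add_one_ne_zero : tK + 1 ≠ 0 := by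
  have h : tK + 1 = algebraMap (Polynomial QSqrt2) Kfield (Polynomial.X + Polynomial.C 1) := by
    rw [map_add, RatFunc.algebraMap_X, RatFunc.algebraMap_C, map_one, tK]
  rw [h]
  exact RatFunc.algebraMap_ne_zero (Polynomial.X_add_C_ne_zero 1)

lemma Ecurve_negY (x y : Kfield) : Ecurve.negY x y = -y := by
  simp [Affine.negY, Ecurve]

open Classical in
/-- `2·P₂ = ((2t−1)t/2, −√2·t(4t² − 5t + 1)/4)` in `E(K)`,
where `P₂ = (t, √2·t(t+1)/4)`. -/
theorem two_smul_P2
    (h2 : Ecurve.Nonsingular tK (sqrt2K * tK * (tK + 1) / 4))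
    (h2' : Ecurve.Nonsingular ((2 * tK - 1) * tK / 2)
      (-(sqrt2K * tK * (4 * tK ^ 2 - 5 * tK + 1)) / 4)) :
    (2 : ℤ) • WeierstrassCurve.Affine.Point.some _ _ h2 =
      WeierstrassCurve.Affine.Point.some _ _ h2' := by
  have hy : sqrt2K * tK * (tK + 1) / 4 ≠ 0 := by
    have hs : sqrt2K ≠ 0 := fun h ↦ two_ne_zero (by simpa [h] using sqrt2K_sq.symm)
    exact div_ne_zero (mul_ne_zero (mul_ne_zero hs RatFunc.X_ne_zero) tK_add_one_ne_zero)
      (by norm_num)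
  -- the tangent slope at `P₂` is `f'(t) / 2y = t²(t + 1) / (√2·t(t + 1) / 2) = √2·t`
  refine Affine.Point.two_zsmul_some_of_tangent (ℓ := sqrt2K * tK) ?_ ?_ ?_ ?_
  · rw [Ecurve_negY]
    exact fun h ↦ hy (by linear_combination h / 2)
  · rw [Ecurve_negY]
    simp only [Ecurve]
    linear_combination (tK ^ 3 + tK ^ 2) / 2 * sqrt2K_sq
  · simp only [Affine.addX, Ecurve]
    linear_combination tK ^ 2 * sqrt2K_sq
  · rw [Affine.addY, Ecurve_negY]
    simp only [Affine.negAddY, Affine.addX, Ecurve]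
    linear_combination (-(sqrt2K * tK ^ 3)) * sqrt2K_sq
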